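/- Fix a real number p with 0.455 ≤ p < 1/2. Then the strategic miner's best response in the immediate-release game strictly beats FRONTIER: liminf_{k→∞} g_k(0,0)/k > p. -/
import Mathlib


/-- The strategic miner's optimal expected gain over `k` levels in the
immediate-release game, starting from the state where his branch has length `a`
and the honest miners' branch has length `b` (meaningful for `a ≤ b + 1`).
We have `gain p 0 a b = 0`; for `k ≥ 1`, at a winning state (`a = b + 1`) the
miner is paid `b + 1` and the game restarts at `(0,0)` one level later;
otherwise he may capitulate to any state `(0, s)` with `s < b` (taking the best
such option) or keep mining, in which case he advances to `(a+1, b)` with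
probability `p` and the honest miners advance to `(a, b+1)` (one level deeper)
with probability `1 - p`. -/
noncomputable def gain (p : ℝ) : ℕ → ℕ → ℕ → ℝ
  | 0, _, _ => 0
  | k + 1, a, b =>
    if h : b + 1 ≤ a then
      gain p k 0 0 + (b + 1 : ℕ)
    else
      ((List.range b).attach.map (fun s => gain p (k + 1) 0 s.1)).foldr max
        (p * gain p (k + 1) (a + 1) b + (1 - p) * gain p k a (b + 1))
termination_by k a b => (k, b, b + 1 - a)
decreasing_by
  all_goals
    first
      | exact Prod.Lex.left _ _ (Nat.lt_succ_self _)
      | exact Prod.Lex.right _ (Prod.Lex.right _ (by omega))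
      | exact Prod.Lex.right _ (Prod.Lex.left _ _ (List.mem_range.mp s.2))

/-! ### Auxiliary definitions: a depth-4 stubborn mining strategy -/

noncomputable def gam (p : ℝ) : ℝ := p + 7/1000
noncomputable def m44 (p : ℝ) : ℝ := p * (5 - gam p) - (1 - p) * gam p
noncomputable def m34 (p : ℝ) : ℝ := p * m44 p - (1 - p) * gam p
noncomputable def m33 (p : ℝ) : ℝ := p * (4 - gam p) + (1 - p) * m34 p - (1 - p) * gam p
noncomputable def m23 (p : ℝ) : ℝ := p * m33 p - (1 - p) * gam p
noncomputable def m22 (p : ℝ) : ℝ := p * (3 - gam p) + (1 - p) * m23 p - (1 - p) * gam p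
noncomputable def m12 (p : ℝ) : ℝ := p * m22 p - (1 - p) * gam p
noncomputable def m11 (p : ℝ) : ℝ := p * (2 - gam p) + (1 - p) * m12 p - (1 - p) * gam p
noncomputable def m01 (p : ℝ) : ℝ := p * m11 p - (1 - p) * gam p
noncomputable def m00 (p : ℝ) : ℝ := p * (1 - gam p) + (1 - p) * m01 p - (1 - p) * gam p

noncomputable def cc (p : ℝ) (a b : ℕ) : ℝ :=
  if a = b + 1 then (b + 1 : ℝ) - gam p
  else if a = 0 ∧ b = 0 then m00 p
  else if a = 0 ∧ b = 1 then m01 p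
  else if a = 1 ∧ b = 1 then m11 p
  else if a = 1 ∧ b = 2 then m12 p
  else if a = 2 ∧ b = 2 then m22 p
  else if a = 2 ∧ b = 3 then m23 p
  else if a = 3 ∧ b = 3 then m33 p
  else if a = 3 ∧ b = 4 then m34 p
  else if a = 4 ∧ b = 4 then m44 p
  else 0

/-! ### Numeric facts -/

lemma hm00 (p : ℝ) (hp : 0.455 ≤ p) (hp2 : p < 1/2) : 0 ≤ m00 p := by
  obtain ⟨t, rfl⟩ : ∃ t, p = 91/200 + t := ⟨p - 91/200, by ring⟩
  have ht0 : 0 ≤ t := by norm_num at hp; linarith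
  have ht : t ≤ 9/200 := by linarith
  have hk : ∀ k : ℕ, t^(k+1) ≤ (9/200:ℝ)^k * t := by
    intro k
    calc t^(k+1) = t^k * t := by ring
    _ ≤ (9/200:ℝ)^k * t := mul_le_mul_of_nonneg_right (pow_le_pow_left₀ ht0 ht k) ht0
  have g : ∀ k : ℕ, 0 ≤ t^k := fun k => pow_nonneg ht0 k
  simp only [m00, m01, m11, m12, m22, m23, m33, m34, m44, gam]
  have h3 := hk 2; have h4 := hk 3; have h7 := hk 6; have h8 := hk 7
  norm_num at h3 h4 h7 h8
  nlinarith [g 2, g 3, g 4, g 5, g 6, g 7, g 8, g 9, h3, h4, h7, h8, g 1]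

lemma gam_nonneg (p : ℝ) (hp : 0.455 ≤ p) : 0 ≤ gam p := by simp only [gam]; linarith
lemma gam_le_one (p : ℝ) (hp2 : p < 1/2) : gam p ≤ 1 := by simp only [gam]; linarith

lemma cc_bounds (p : ℝ) (hp : 0.455 ≤ p) (hp2 : p < 1/2) :
    m44 p ≤ 6 ∧ m34 p ≤ 6 ∧ m33 p ≤ 6 ∧ m23 p ≤ 6 ∧ m22 p ≤ 6 ∧ m12 p ≤ 6 ∧
      m11 p ≤ 6 ∧ m01 p ≤ 6 ∧ m00 p ≤ 6 := by
  have hp0 : (0:ℝ) ≤ p := by linarith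
  have hq0 : (0:ℝ) ≤ 1 - p := by linarith
  have hg0 : 0 ≤ gam p := by simp only [gam]; linarith
  have hg1 : gam p ≤ 1 := by simp only [gam]; linarith
  have h44 : m44 p ≤ 6 := by simp only [m44]; nlinarith [mul_nonneg hp0 hg0, mul_nonneg hq0 hg0]
  have h34 : m34 p ≤ 6 := by simp only [m34]; nlinarith [mul_le_mul_of_nonneg_left h44 hp0, mul_nonneg hq0 hg0]
  have h33 : m33 p ≤ 6 := by simp only [m33]; nlinarith [mul_le_mul_of_nonneg_left h34 hq0, mul_nonneg hp0 hg0, mul_nonneg hq0 hg0]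
  have h23 : m23 p ≤ 6 := by simp only [m23]; nlinarith [mul_le_mul_of_nonneg_left h33 hp0, mul_nonneg hq0 hg0]
  have h22 : m22 p ≤ 6 := by simp only [m22]; nlinarith [mul_le_mul_of_nonneg_left h23 hq0, mul_nonneg hp0 hg0, mul_nonneg hq0 hg0]
  have h12 : m12 p ≤ 6 := by simp only [m12]; nlinarith [mul_le_mul_of_nonneg_left h22 hp0, mul_nonneg hq0 hg0]
  have h11 : m11 p ≤ 6 := by simp only [m11]; nlinarith [mul_le_mul_of_nonneg_left h12 hq0, mul_nonneg hp0 hg0, mul_nonneg hq0 hg0]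
  have h01 : m01 p ≤ 6 := by simp only [m01]; nlinarith [mul_le_mul_of_nonneg_left h11 hp0, mul_nonneg hq0 hg0]
  have h00 : m00 p ≤ 6 := by simp only [m00]; nlinarith [mul_le_mul_of_nonneg_left h01 hq0, mul_nonneg hp0 hg0, mul_nonneg hq0 hg0]
  exact ⟨h44, h34, h33, h23, h22, h12, h11, h01, h00⟩

set_option maxHeartbeats 1000000 in
lemma cc_le_six (p : ℝ) (hp : 0.455 ≤ p) (hp2 : p < 1/2) (a b : ℕ) (hb : b ≤ 5) :
    cc p a b ≤ 6 := by
  have hg := gam_nonneg p hp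
  obtain ⟨h44, h34, h33, h23, h22, h12, h11, h01, h00⟩ := cc_bounds p hp hp2
  unfold cc
  split_ifs
  · have : (b : ℝ) ≤ 5 := by exact_mod_cast hb
    linarith
  all_goals linarith

/-! ### foldr max facts and one-step gain facts -/

lemma le_foldr_max_init (l : List ℝ) (init : ℝ) : init ≤ l.foldr max init := by
  induction l with
  | nil => simp
  | cons x xs ih => exact le_trans ih (le_max_right _ _)

lemma le_foldr_max_mem {l : List ℝ} {x : ℝ} (init : ℝ) (h : x ∈ l) : x ≤ l.foldr max init := by
  induction l with
  | nil => simp at h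
  | cons y ys ih =>
    rcases List.mem_cons.mp h with rfl | h
    · exact le_max_left _ _
    · exact le_trans (ih h) (le_max_right _ _)

lemma foldr_max_le {l : List ℝ} {init c : ℝ} (h0 : init ≤ c) (h : ∀ x ∈ l, x ≤ c) :
    l.foldr max init ≤ c := by
  induction l with
  | nil => simpa
  | cons y ys ih =>
    simp only [List.foldr_cons]
    exact max_le (h y (by simp)) (ih fun x hx => h x (by simp [hx]))

lemma gain_zero (p : ℝ) (a b : ℕ) : gain p 0 a b = 0 := by rw [gain]

lemma gain_succ (p : ℝ) (k a b : ℕ) : gain p (k+1) a b =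
    if _ : b + 1 ≤ a then
      gain p k 0 0 + (b + 1 : ℕ)
    else
      ((List.range b).attach.map (fun s => gain p (k + 1) 0 s.1)).foldr max
        (p * gain p (k + 1) (a + 1) b + (1 - p) * gain p k a (b + 1)) := by
  rw [gain]

lemma gain_win (p : ℝ) (k a b : ℕ) (h : b + 1 ≤ a) :
    gain p (k+1) a b = gain p k 0 0 + (b + 1 : ℕ) := by
  rw [gain_succ, dif_pos h]

lemma gain_mine (p : ℝ) (k a b : ℕ) (h : a ≤ b) :
    p * gain p (k + 1) (a + 1) b + (1 - p) * gain p k a (b + 1) ≤ gain p (k+1) a b := by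
  conv_rhs => rw [gain_succ, dif_neg (show ¬ (b + 1 ≤ a) by omega)]
  exact le_foldr_max_init _ _

lemma gain_cap (p : ℝ) (k a b : ℕ) (h : a ≤ b) (hb : 0 < b) :
    gain p (k+1) 0 0 ≤ gain p (k+1) a b := by
  rw [gain_succ (p := p) (k := k) (a := a) (b := b), dif_neg (by omega)]
  exact le_foldr_max_mem _ (List.mem_map.mpr ⟨⟨0, List.mem_range.mpr hb⟩, List.mem_attach _ _, rfl⟩)

set_option maxHeartbeats 1000000 in
lemma win_step (p : ℝ) (hp : 0.455 ≤ p) (hp2 : p < 1/2) (k a b : ℕ) (hw : b + 1 ≤ a)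
    (h0 : gam p * (k : ℝ) + cc p 0 0 - 6 ≤ gain p k 0 0) :
    gam p * ((k+1 : ℕ) : ℝ) + cc p a b - 6 ≤ gain p (k+1) a b := by
  rw [gain_win p k a b hw]
  have h00 : cc p 0 0 = m00 p := by norm_num [cc]
  have hm := hm00 p hp hp2
  have hg1 := gam_le_one p hp2
  have hb0 : (0:ℝ) ≤ (b:ℝ) := Nat.cast_nonneg b
  have hcab : cc p a b ≤ (b + 1 : ℝ) - gam p := by
    unfold cc
    split_ifs <;> first | exact le_rfl | omega | linarith
  push_cast
  linarith

lemma mine_step (p : ℝ) (hp : 0.455 ≤ p) (hp2 : p < 1/2) (k a b : ℕ) (hab : a ≤ b)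
    (h1 : gam p * ((k+1 : ℕ) : ℝ) + cc p (a+1) b - 6 ≤ gain p (k+1) (a+1) b)
    (h2 : gam p * (k : ℝ) + cc p a (b+1) - 6 ≤ gain p k a (b+1))
    (hc : cc p a b ≤ p * cc p (a+1) b + (1-p) * cc p a (b+1) - (1-p) * gam p) :
    gam p * ((k+1 : ℕ) : ℝ) + cc p a b - 6 ≤ gain p (k+1) a b := by
  have hp0 : (0:ℝ) ≤ p := by linarith
  have hq0 : (0:ℝ) ≤ 1 - p := by linarith
  refine le_trans ?_ (gain_mine p k a b hab)
  have e1 := mul_le_mul_of_nonneg_left h1 hp0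
  have e2 := mul_le_mul_of_nonneg_left h2 hq0
  push_cast at e1 e2 ⊢
  linarith [e1, e2, hc]

lemma cap_step (p : ℝ) (hp : 0.455 ≤ p) (hp2 : p < 1/2) (k a b : ℕ) (hab : a ≤ b) (hb : 0 < b)
    (hc : cc p a b = 0)
    (h0 : gam p * ((k+1 : ℕ) : ℝ) + cc p 0 0 - 6 ≤ gain p (k+1) 0 0) :
    gam p * ((k+1 : ℕ) : ℝ) + cc p a b - 6 ≤ gain p (k+1) a b := by
  have h00 : cc p 0 0 = m00 p := by norm_num [cc]
  have hm := hm00 p hp hp2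
  have hcap := gain_cap p k a b hab hb
  rw [hc]
  rw [h00] at h0
  linarith

set_option maxHeartbeats 2000000 in
lemma gain_lb (p : ℝ) (hp : 0.455 ≤ p) (hp2 : p < 1/2) :
    ∀ n k a b : ℕ, 49*k + 7*b + (b+1-a) ≤ n → b ≤ 5 →
      gam p * (k : ℝ) + cc p a b - 6 ≤ gain p k a b := by
  intro n
  induction n using Nat.strong_induction_on with
  | _ n ih =>
    intro k a b hn hb
    match k with
    | 0 =>
      rw [gain_zero]
      have := cc_le_six p hp hp2 a b hb
      norm_num
      linarith
    | (k+1) =>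
      by_cases hw : b + 1 ≤ a
      · exact win_step p hp hp2 k a b hw (ih (49*k+1) (by omega) k 0 0 (by omega) (by omega))
      · have hab : a ≤ b := by omega
        interval_cases b
        · -- b = 0
          interval_cases a
          · exact mine_step p hp hp2 k 0 0 (by omega)
              (ih (49*(k+1)) (by omega) (k+1) 1 0 (by omega) (by omega))
              (ih (49*k+9) (by omega) k 0 1 (by omega) (by omega))
              (le_of_eq (by norm_num [cc]; rw [m00]; try ring))
        · -- b = 1
          interval_cases a
          · exact mine_step p hp hp2 k 0 1 (by omega)
              (ih (49*(k+1)+8) (by omega) (k+1) 1 1 (by omega) (by omega))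
              (ih (49*k+17) (by omega) k 0 2 (by omega) (by omega))
              (le_of_eq (by norm_num [cc]; rw [m01]; try ring))
          · exact mine_step p hp hp2 k 1 1 (by omega)
              (ih (49*(k+1)+7) (by omega) (k+1) 2 1 (by omega) (by omega))
              (ih (49*k+16) (by omega) k 1 2 (by omega) (by omega))
              (le_of_eq (by norm_num [cc]; rw [m11]; try ring))
        · -- b = 2
          interval_cases a
          · exact cap_step p hp hp2 k 0 2 (by omega) (by omega) (by norm_num [cc])
              (ih (49*(k+1)+1) (by omega) (k+1) 0 0 (by omega) (by omega))
          · exact mine_step p hp hp2 k 1 2 (by omega)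
              (ih (49*(k+1)+15) (by omega) (k+1) 2 2 (by omega) (by omega))
              (ih (49*k+24) (by omega) k 1 3 (by omega) (by omega))
              (le_of_eq (by norm_num [cc]; rw [m12]; try ring))
          · exact mine_step p hp hp2 k 2 2 (by omega)
              (ih (49*(k+1)+14) (by omega) (k+1) 3 2 (by omega) (by omega))
              (ih (49*k+23) (by omega) k 2 3 (by omega) (by omega))
              (le_of_eq (by norm_num [cc]; rw [m22]; try ring))
        · -- b = 3
          interval_cases a
          · exact cap_step p hp hp2 k 0 3 (by omega) (by omega) (by norm_num [cc])
              (ih (49*(k+1)+1) (by omega) (k+1) 0 0 (by omega) (by omega))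
          · exact cap_step p hp hp2 k 1 3 (by omega) (by omega) (by norm_num [cc])
              (ih (49*(k+1)+1) (by omega) (k+1) 0 0 (by omega) (by omega))
          · exact mine_step p hp hp2 k 2 3 (by omega)
              (ih (49*(k+1)+22) (by omega) (k+1) 3 3 (by omega) (by omega))
              (ih (49*k+31) (by omega) k 2 4 (by omega) (by omega))
              (le_of_eq (by norm_num [cc]; rw [m23]; try ring))
          · exact mine_step p hp hp2 k 3 3 (by omega)
              (ih (49*(k+1)+21) (by omega) (k+1) 4 3 (by omega) (by omega))
              (ih (49*k+30) (by omega) k 3 4 (by omega) (by omega))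
              (le_of_eq (by norm_num [cc]; rw [m33]; try ring))
        · -- b = 4
          interval_cases a
          · exact cap_step p hp hp2 k 0 4 (by omega) (by omega) (by norm_num [cc])
              (ih (49*(k+1)+1) (by omega) (k+1) 0 0 (by omega) (by omega))
          · exact cap_step p hp hp2 k 1 4 (by omega) (by omega) (by norm_num [cc])
              (ih (49*(k+1)+1) (by omega) (k+1) 0 0 (by omega) (by omega))
          · exact cap_step p hp hp2 k 2 4 (by omega) (by omega) (by norm_num [cc])
              (ih (49*(k+1)+1) (by omega) (k+1) 0 0 (by omega) (by omega))
          · exact mine_step p hp hp2 k 3 4 (by omega)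
              (ih (49*(k+1)+29) (by omega) (k+1) 4 4 (by omega) (by omega))
              (ih (49*k+38) (by omega) k 3 5 (by omega) (by omega))
              (le_of_eq (by norm_num [cc]; rw [m34]; try ring))
          · exact mine_step p hp hp2 k 4 4 (by omega)
              (ih (49*(k+1)+28) (by omega) (k+1) 5 4 (by omega) (by omega))
              (ih (49*k+37) (by omega) k 4 5 (by omega) (by omega))
              (le_of_eq (by norm_num [cc]; rw [m44]; try ring))
        · -- b = 5
          interval_cases a
          · exact cap_step p hp hp2 k 0 5 (by omega) (by omega) (by norm_num [cc])
              (ih (49*(k+1)+1) (by omega) (k+1) 0 0 (by omega) (by omega))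
          · exact cap_step p hp hp2 k 1 5 (by omega) (by omega) (by norm_num [cc])
              (ih (49*(k+1)+1) (by omega) (k+1) 0 0 (by omega) (by omega))
          · exact cap_step p hp hp2 k 2 5 (by omega) (by omega) (by norm_num [cc])
              (ih (49*(k+1)+1) (by omega) (k+1) 0 0 (by omega) (by omega))
          · exact cap_step p hp hp2 k 3 5 (by omega) (by omega) (by norm_num [cc])
              (ih (49*(k+1)+1) (by omega) (k+1) 0 0 (by omega) (by omega))
          · exact cap_step p hp hp2 k 4 5 (by omega) (by omega) (by norm_num [cc])
              (ih (49*(k+1)+1) (by omega) (k+1) 0 0 (by omega) (by omega))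
          · exact cap_step p hp hp2 k 5 5 (by omega) (by omega) (by norm_num [cc])
              (ih (49*(k+1)+1) (by omega) (k+1) 0 0 (by omega) (by omega))

lemma gain_ub (p : ℝ) (hp0 : 0 ≤ p) (hp1 : p ≤ 1) (k a b : ℕ) : gain p k a b ≤ k + b := by
  match k with
  | 0 =>
    rw [gain_zero]
    positivity
  | (k+1) =>
    rw [gain_succ]
    split_ifs with h
    · have h0 := gain_ub p hp0 hp1 k 0 0
      push_cast at h0 ⊢
      linarith
    · apply foldr_max_le
      · have h1 := gain_ub p hp0 hp1 (k+1) (a+1) b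
        have h2 := gain_ub p hp0 hp1 k a (b+1)
        have e1 := mul_le_mul_of_nonneg_left h1 hp0
        have e2 := mul_le_mul_of_nonneg_left h2 (by linarith : (0:ℝ) ≤ 1 - p)
        push_cast at e1 e2 ⊢
        linarith
      · intro x hx
        obtain ⟨s, _, rfl⟩ := List.mem_map.mp hx
        have h3 := gain_ub p hp0 hp1 (k+1) 0 s.1
        have hs : s.1 < b := List.mem_range.mp s.2
        have hsb : (s.1 : ℝ) ≤ (b : ℝ) := by exact_mod_cast hs.le
        push_cast at h3 ⊢
        linarith
termination_by (k, b, b + 1 - a)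
decreasing_by
  all_goals
    first
      | exact Prod.Lex.left _ _ (Nat.lt_succ_self _)
      | exact Prod.Lex.right _ (Prod.Lex.right _ (by omega))
      | exact Prod.Lex.right _ (Prod.Lex.left _ _ (List.mem_range.mp s.2))

/-- If the strategic miner's relative computational power satisfies
`0.455 ≤ p < 1/2`, then his best response in the immediate-release game
strictly beats FRONTIER: `liminf_{k→∞} g_k(0,0)/k > p`. -/
theorem frontier_not_best_response_immediate_release (p : ℝ)
    (hp : 0.455 ≤ p) (hp2 : p < 1 / 2) :
    p < Filter.liminf (fun k : ℕ => gain p k 0 0 / k) Filter.atTop := by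
  have key : ∀ k : ℕ, gam p * k - 6 ≤ gain p k 0 0 := by
    intro k
    have h := gain_lb p hp hp2 (49*k+1) k 0 0 (by omega) (by omega)
    have h00 : cc p 0 0 = m00 p := by norm_num [cc]
    have hm := hm00 p hp hp2
    rw [h00] at h
    linarith
  have hx : p < p + 7/2000 := by norm_num
  have hev : ∀ᶠ (k : ℕ) in Filter.atTop, p + 7/2000 ≤ gain p k 0 0 / k := by
    filter_upwards [Filter.eventually_ge_atTop 12000] with k hk
    have hk0 : (0:ℝ) < (k:ℝ) := by
      have : (12000:ℝ) ≤ (k:ℝ) := by exact_mod_cast hk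
      linarith
    rw [le_div_iff₀ hk0]
    have hkc : (12000:ℝ) ≤ (k:ℝ) := by exact_mod_cast hk
    have hg : gam p = p + 7/1000 := rfl
    have := key k
    rw [hg] at this
    nlinarith
  have hcb : Filter.IsCoboundedUnder (· ≥ ·) Filter.atTop (fun k : ℕ => gain p k 0 0 / k) := by
    refine Filter.isCoboundedUnder_ge_of_eventually_le Filter.atTop (x := 1) ?_
    filter_upwards [Filter.eventually_ge_atTop 1] with k hk
    have hk0 : (0:ℝ) < (k:ℝ) := by exact_mod_cast hk
    rw [div_le_iff₀ hk0]
    have := gain_ub p (by linarith) (by linarith) k 0 0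
    push_cast at this
    linarith
  have := Filter.le_liminf_of_le hcb hev
  linarith
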